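/- Let r ≥ 1 and n ≥ r. The ideal I_r(K_{1,n}) of K[x_0, x_1, …, x_n] associated to the star graph K_{1,n} is generated by the monomials x_0 · x_{i_1} ⋯ x_{i_r} where {i_1, …, i_r} ranges over all r-subsets of [n], and its graded Betti numbers satisfy β_{i, i+r}(R/I_r(K_{1,n})) = C(i+r−2, r−1) · C(n, i+r−1) for 1 ≤ i ≤ n − r + 1, and β_{i,i+d}(R/I_r(K_{1,n})) = 0 for d ≠ r with (i,d) ≠ (0,0). -/

import Mathlib

open Finset

/-- An (abstract) simplicial complex on vertex type `V`: a downward-closed collection of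
finite subsets of `V`. -/
structure SC (V : Type*) where
  faces : Set (Finset V)
  down : ∀ ⦃F G : Finset V⦄, F ∈ faces → G ⊆ F → G ∈ faces

variable {V : Type*} [LinearOrder V] (K : Type*) [Field K]

/-- The faces of `Δ` of cardinality `k` (the `(k-1)`-dimensional faces). -/
def SC.face (Δ : SC V) (k : ℕ) : Type _ := {F : Finset V // F ∈ Δ.faces ∧ F.card = k}

/-- The `k`-th term of the reduced simplicial chain complex of `Δ` over `K`: the free
`K`-vector space on the faces of cardinality `k` (so degree `k` corresponds to simplicial
dimension `k - 1`; degree `0` is spanned by the empty face). -/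
abbrev SC.chain (Δ : SC V) (k : ℕ) : Type _ := Δ.face k →₀ K

/-- The simplicial boundary map `C_{k+1} → C_k`, with the usual alternating signs
determined by the linear order on the vertices. -/
noncomputable def SC.bdry (Δ : SC V) (k : ℕ) : Δ.chain K (k + 1) →ₗ[K] Δ.chain K k :=
  Finsupp.lsum K fun F => LinearMap.toSpanSingleton K _
    (∑ x ∈ F.1.attach,
      ((-1 : K) ^ ((F.1.filter (fun y => y < x.1)).card)) •
        Finsupp.single
          (⟨F.1.erase x.1, Δ.down F.2.1 (Finset.erase_subset _ _), by
              simp [Finset.card_erase_of_mem x.2, F.2.2]⟩ : Δ.face k)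
          (1 : K))

/-- The boundary map out of degree `k` (the zero map in degree `0`). -/
noncomputable def SC.bdryTo (Δ : SC V) : (k : ℕ) → (Δ.chain K k →ₗ[K] Δ.chain K (k - 1))
  | 0 => 0
  | (k + 1) => Δ.bdry K k

/-- The dimension over `K` of the degree-`k` reduced simplicial homology of `Δ`
(i.e. the reduced homology in simplicial dimension `k - 1`): since the image of the
boundary is contained in its kernel, this is `dim ker ∂_k − dim im ∂_{k+1}`. -/
noncomputable def SC.hdim (Δ : SC V) (k : ℕ) : ℕ :=
  Module.finrank K (LinearMap.ker (Δ.bdryTo K k)) -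
    Module.finrank K (LinearMap.range (Δ.bdry K k))

/-- The induced subcomplex `Δ[W]` of `Δ` on a subset `W` of the vertices. -/
def SC.induce (Δ : SC V) (W : Finset V) : SC V :=
  ⟨{F | F ∈ Δ.faces ∧ F ⊆ W}, fun F G hF hGF => ⟨Δ.down hF.1 hGF, hGF.trans hF.2⟩⟩

/-- The graded Betti numbers `β_{i,j}` of the Stanley–Reisner ring of `Δ` over `K`,
via Hochster's formula: `β_{i,j} = ∑_{W ⊆ V, |W| = j} dim_K H̃_{j-i-1}(Δ[W]; K)`. -/
noncomputable def SC.betti [Fintype V] (Δ : SC V) (i j : ℕ) : ℕ :=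
  ∑ W ∈ Finset.univ.powersetCard j, (Δ.induce W).hdim K (j - i)

/-- The Castelnuovo–Mumford regularity of the Stanley–Reisner ring of `Δ` over `K`:
`reg = max { d : β_{i,i+d} ≠ 0 for some i }`. -/
noncomputable def SC.reg [Fintype V] (Δ : SC V) : ℕ :=
  sSup {d : ℕ | ∃ i : ℕ, Δ.betti K i (i + d) ≠ 0}

/-- The Stanley–Reisner complex of the hyperedge ideal `I_r(K_{1,n})` of the star graph
with center `0`: the faces are the subsets `F` of `{0, 1, …, n}` such that if `0 ∈ F`
then `|F| ≤ r`. -/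
def starSC (n r : ℕ) : SC (Fin (n + 1)) :=
  ⟨{F | 0 ∈ F → F.card ≤ r}, fun F G hF hGF h0 =>
    (Finset.card_le_card hGF).trans (hF (hGF h0))⟩

/-!
By Hochster's formula everything reduces to the reduced homology of the induced subcomplexes
`Δ[W]` of the star complex `Δ`. If `0 ∉ W` or `|W| ≤ r`, `Δ[W]` is a full simplex. Otherwise its
faces are all subsets of `W` of size at most `r` together with all subsets of `W \ {0}`, so every
face of size `< r` can be coned off by `0` and every face of size `> r` by any `v ∈ W \ {0}`:
the homology is concentrated in degree `r`. The ranks of the boundary maps are then forced by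
exactness and the face counts `C(|W|, k)` (`k ≤ r`) and `C(|W| - 1, k)` (`k > r`), and Pascal's
rule leaves `dim H̃ = C(|W| - 2, r - 1)`; there are `C(n, i + r - 1)` sets `W ∋ 0` of size `i + r`.

Coning off is a chain homotopy `∂ h_v + h_v ∂ = id` on the free module on all finite subsets
of the vertices, into which the chain complex of every simplicial complex embeds.
-/

namespace FinsetChain

noncomputable def sign (S : Finset V) (x : V) : K := (-1) ^ #{y ∈ S | y < x}

noncomputable def boundary : (Finset V →₀ K) →ₗ[K] (Finset V →₀ K) :=
  Finsupp.linearCombination K fun S => ∑ x ∈ S, sign K S x • Finsupp.single (S.erase x) 1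

noncomputable def cone (v : V) : (Finset V →₀ K) →ₗ[K] (Finset V →₀ K) :=
  Finsupp.linearCombination K fun S =>
    if v ∈ S then 0 else sign K S v • Finsupp.single (insert v S) 1

variable {K}

@[simp]
lemma boundary_single_one (S : Finset V) :
    boundary K (Finsupp.single S 1) = ∑ x ∈ S, sign K S x • Finsupp.single (S.erase x) 1 := by
  simp [boundary]

@[simp]
lemma cone_single_one (v : V) (S : Finset V) :
    cone K v (Finsupp.single S 1) =
      if v ∈ S then 0 else sign K S v • Finsupp.single (insert v S) 1 := by
  simp [cone]

lemma sign_mul_self (S : Finset V) (x : V) : sign K S x * sign K S x = 1 := by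
  rw [sign, ← pow_add, ← two_mul, pow_mul, neg_one_sq, one_pow]

lemma sign_erase_of_lt {S : Finset V} {x v : V} (hx : x ∈ S) (h : x < v) :
    sign K (S.erase x) v = -sign K S v := by
  have hcard : #{y ∈ S | y < v} = #{y ∈ S.erase x | y < v} + 1 := by
    rw [filter_erase, card_erase_add_one (mem_filter.2 ⟨hx, h⟩)]
  rw [sign, sign, hcard, pow_succ, mul_neg_one, neg_neg]

lemma sign_erase_of_not_lt (S : Finset V) {x v : V} (h : ¬ x < v) :
    sign K (S.erase x) v = sign K S v := by
  rw [sign, sign, filter_erase, erase_eq_of_notMem (by simp [h])]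

lemma sign_insert_of_lt {S : Finset V} {x v : V} (hv : v ∉ S) (h : v < x) :
    sign K (insert v S) x = -sign K S x := by
  rw [← erase_insert hv, sign_erase_of_lt (mem_insert_self v S) h, neg_neg, erase_insert hv]

lemma sign_insert_of_not_lt {S : Finset V} {x v : V} (hv : v ∉ S) (h : ¬ v < x) :
    sign K (insert v S) x = sign K S x := by
  rw [← sign_erase_of_not_lt _ h, erase_insert hv]

lemma sign_mul_sign_erase_add_swap {S : Finset V} {x y : V} (hx : x ∈ S) (hy : y ∈ S)
    (hxy : x ≠ y) :
    sign K S x * sign K (S.erase x) y + sign K S y * sign K (S.erase y) x = 0 := by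
  rcases hxy.lt_or_gt with h | h
  · rw [sign_erase_of_lt hx h, sign_erase_of_not_lt S h.not_gt]
    ring
  · rw [sign_erase_of_lt hy h, sign_erase_of_not_lt S h.not_gt]
    ring

lemma sign_mul_sign_insert_add_sign_mul_sign_erase {S : Finset V} {x v : V} (hx : x ∈ S)
    (hv : v ∉ S) :
    sign K S v * sign K (insert v S) x + sign K S x * sign K (S.erase x) v = 0 := by
  rcases (ne_of_mem_of_not_mem hx hv).lt_or_gt with h | h
  · rw [sign_insert_of_not_lt hv h.not_gt, sign_erase_of_lt hx h]
    ring
  · rw [sign_insert_of_lt hv h, sign_erase_of_not_lt S h.not_gt]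
    ring

lemma boundary_comp_boundary :
    boundary K ∘ₗ boundary K = (0 : Module.End K (Finset V →₀ K)) := by
  ext S : 2
  simp only [LinearMap.comp_apply, Finsupp.lsingle_apply, LinearMap.zero_apply,
    boundary_single_one, map_sum, map_smul, Finset.smul_sum, smul_smul]
  rw [Finset.sum_sigma']
  refine Finset.sum_involution (fun p _ => ⟨p.2, p.1⟩) (fun p hp => ?_) (fun p hp _ => ?_)
    (fun p hp => ?_) (fun p _ => rfl)
  all_goals obtain ⟨hx, hyx, hy⟩ : p.1 ∈ S ∧ p.2 ≠ p.1 ∧ p.2 ∈ S := by simpa using hp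
  · rw [erase_right_comm, ← add_smul, sign_mul_sign_erase_add_swap hx hy hyx.symm, zero_smul]
  · exact fun h => hyx (congrArg Sigma.fst h)
  · simpa using ⟨hy, hyx.symm, hx⟩

lemma boundary_comp_cone_add_cone_comp_boundary (v : V) :
    boundary K ∘ₗ cone K v + cone K v ∘ₗ boundary K = LinearMap.id := by
  ext S : 2
  simp only [LinearMap.add_apply, LinearMap.comp_apply, Finsupp.lsingle_apply, LinearMap.id_apply,
    cone_single_one, boundary_single_one, map_sum, map_smul]
  by_cases hv : v ∈ S
  · rw [if_pos hv, map_zero, zero_add, Finset.sum_eq_single_of_mem v hv fun x _ hxv => by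
      rw [if_pos (mem_erase.2 ⟨hxv.symm, hv⟩), smul_zero]]
    rw [if_neg (notMem_erase v S), insert_erase hv, smul_smul,
      sign_erase_of_not_lt S (lt_irrefl v), sign_mul_self, one_smul]
  · have hcancel : ∀ x ∈ S, sign K S v • sign K (insert v S) x •
        Finsupp.single ((insert v S).erase x) (1 : K) +
        sign K S x • (if v ∈ S.erase x then 0 else
          sign K (S.erase x) v • Finsupp.single (insert v (S.erase x)) 1) = 0 := by
      intro x hx
      rw [if_neg fun h => hv (mem_of_mem_erase h), smul_smul, smul_smul,
        erase_insert_of_ne (ne_of_mem_of_not_mem hx hv).symm, ← add_smul,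
        sign_mul_sign_insert_add_sign_mul_sign_erase hx hv, zero_smul]
    rw [if_neg hv, map_smul, boundary_single_one, sum_insert hv, smul_add, add_assoc,
      Finset.smul_sum, ← sum_add_distrib, sum_eq_zero hcancel, add_zero, erase_insert hv,
      smul_smul, ← sign_insert_of_not_lt hv (lt_irrefl v), sign_mul_self, one_smul]

end FinsetChain

namespace SC

open FinsetChain

variable (Δ : SC V)

instance [Finite V] (k : ℕ) : Finite (Δ.face k) := Subtype.finite

noncomputable def inclusion (k : ℕ) : Δ.chain K k →ₗ[K] (Finset V →₀ K) :=
  Finsupp.lmapDomain K K Subtype.val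

def IsConeInDegree (v : V) (k : ℕ) : Prop :=
  ∀ F ∈ Δ.faces, #F = k → v ∉ F → insert v F ∈ Δ.faces

variable {K} {Δ}

omit [LinearOrder V] in
lemma inclusion_injective (k : ℕ) : Function.Injective (Δ.inclusion K k) :=
  Finsupp.mapDomain_injective Subtype.val_injective

omit [LinearOrder V] in
@[simp]
lemma inclusion_single {k : ℕ} (F : Δ.face k) (a : K) :
    Δ.inclusion K k (Finsupp.single F a) = Finsupp.single F.1 a :=
  Finsupp.mapDomain_single

lemma inclusion_comp_bdryTo (k : ℕ) :
    Δ.inclusion K (k - 1) ∘ₗ Δ.bdryTo K k = boundary K ∘ₗ Δ.inclusion K k := by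
  ext F : 2
  cases k with
  | zero =>
    have hF : F.1 = ∅ := card_eq_zero.1 F.2.2
    simp [bdryTo, hF]
  | succ k =>
    show Δ.inclusion K k (Δ.bdry K k (Finsupp.single F 1)) =
      boundary K (Δ.inclusion K (k + 1) (Finsupp.single F 1))
    simp only [bdry, Finsupp.lsum_single, LinearMap.toSpanSingleton_apply, one_smul,
      inclusion_single, boundary_single_one, sign]
    erw [map_sum]
    rw [← sum_attach F.1]
    refine sum_congr rfl fun x _ => ?_
    erw [map_smul, inclusion_single]

lemma inclusion_comp_bdry (k : ℕ) :
    Δ.inclusion K k ∘ₗ Δ.bdry K k = boundary K ∘ₗ Δ.inclusion K (k + 1) :=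
  inclusion_comp_bdryTo (k + 1)

lemma range_bdry_le_ker_bdryTo (k : ℕ) :
    LinearMap.range (Δ.bdry K k) ≤ LinearMap.ker (Δ.bdryTo K k) := by
  rintro _ ⟨y, rfl⟩
  apply inclusion_injective (k - 1)
  rw [map_zero, ← LinearMap.comp_apply, inclusion_comp_bdryTo, LinearMap.comp_apply,
    ← LinearMap.comp_apply (Δ.inclusion K k), inclusion_comp_bdry,
    LinearMap.comp_apply, ← LinearMap.comp_apply (boundary K), boundary_comp_boundary,
    LinearMap.zero_apply]

lemma cone_inclusion_mem_range {v : V} {k : ℕ} (hΔ : Δ.IsConeInDegree v k) (x : Δ.chain K k) :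
    cone K v (Δ.inclusion K k x) ∈ LinearMap.range (Δ.inclusion K (k + 1)) := by
  induction x using Finsupp.induction_linear with
  | zero => simp
  | add x y hx hy => rw [map_add, map_add]; exact add_mem hx hy
  | single F a =>
    rw [← mul_one a, ← smul_eq_mul, ← Finsupp.smul_single, map_smul, map_smul,
      inclusion_single, cone_single_one]
    refine Submodule.smul_mem _ a ?_
    split_ifs with hv
    · exact zero_mem _
    · have hF : insert v F.1 ∈ Δ.faces ∧ #(insert v F.1) = k + 1 :=
        ⟨hΔ F.1 F.2.1 F.2.2 hv, by rw [card_insert_of_notMem hv, F.2.2]⟩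
      exact ⟨Finsupp.single (⟨insert v F.1, hF⟩ : Δ.face (k + 1)) (sign K F.1 v),
        (inclusion_single _ _).trans (Finsupp.smul_single_one _ _).symm⟩

lemma ker_bdryTo_le_range_bdry {v : V} {k : ℕ} (hΔ : Δ.IsConeInDegree v k) :
    LinearMap.ker (Δ.bdryTo K k) ≤ LinearMap.range (Δ.bdry K k) := by
  intro x hx
  obtain ⟨y, hy⟩ := cone_inclusion_mem_range hΔ x
  have hcycle : boundary K (Δ.inclusion K k x) = 0 := by
    rw [← LinearMap.comp_apply, ← inclusion_comp_bdryTo, LinearMap.comp_apply, hx, map_zero]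
  refine ⟨y, inclusion_injective k ?_⟩
  have hhomotopy := LinearMap.congr_fun (boundary_comp_cone_add_cone_comp_boundary (K := K) v)
    (Δ.inclusion K k x)
  rw [LinearMap.add_apply, LinearMap.comp_apply, LinearMap.comp_apply, hcycle, map_zero, add_zero,
    ← hy, LinearMap.id_apply] at hhomotopy
  rw [← hhomotopy, ← LinearMap.comp_apply, inclusion_comp_bdry, LinearMap.comp_apply]

open Module LinearMap

omit [LinearOrder V] in
lemma finrank_chain_eq_card {k : ℕ} {X : Finset (Finset V)}
    (hX : ∀ F, F ∈ X ↔ F ∈ Δ.faces ∧ #F = k) : finrank K (Δ.chain K k) = #X := by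
  let _ : Fintype (Δ.face k) := Fintype.subtype X hX
  rw [finrank_finsupp_self]
  exact Fintype.subtype_card X hX

variable [Finite V] {v : V} {k : ℕ}

lemma finrank_ker_bdryTo_eq_of_isCone (hΔ : Δ.IsConeInDegree v k) :
    finrank K (ker (Δ.bdryTo K k)) = finrank K (range (Δ.bdry K k)) :=
  le_antisymm (Submodule.finrank_mono (ker_bdryTo_le_range_bdry hΔ))
    (Submodule.finrank_mono (range_bdry_le_ker_bdryTo k))

lemma hdim_eq_zero_of_isCone (hΔ : Δ.IsConeInDegree v k) : Δ.hdim K k = 0 := by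
  rw [hdim, finrank_ker_bdryTo_eq_of_isCone hΔ, Nat.sub_self]

lemma finrank_range_bdry_zero_of_isCone (hΔ : Δ.IsConeInDegree v 0) :
    finrank K (range (Δ.bdry K 0)) = finrank K (Δ.chain K 0) := by
  rw [← finrank_ker_bdryTo_eq_of_isCone hΔ, bdryTo, ker_zero, finrank_top]

lemma finrank_range_bdry_add_finrank_ker_bdryTo (k : ℕ) :
    finrank K (range (Δ.bdry K k)) + finrank K (ker (Δ.bdryTo K (k + 1))) =
      finrank K (Δ.chain K (k + 1)) :=
  finrank_range_add_finrank_ker (Δ.bdry K k)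

lemma finrank_range_bdry_add_of_isCone (hΔ : Δ.IsConeInDegree v (k + 1)) :
    finrank K (range (Δ.bdry K k)) + finrank K (range (Δ.bdry K (k + 1))) =
      finrank K (Δ.chain K (k + 1)) := by
  rw [← finrank_ker_bdryTo_eq_of_isCone hΔ, finrank_range_bdry_add_finrank_ker_bdryTo]

end SC

namespace Nat

/- Read `ρ j` as the rank of the boundary map out of degree `j + 1`: exactness in degree `j + 1`
says `ρ j + ρ (j + 1)` is the dimension of the chains of degree `j + 1`. -/

lemma eq_choose_of_add_eq_choose_of_le {ρ : ℕ → ℕ} {m k : ℕ} (h0 : ρ 0 = 1)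
    (h : ∀ j < k, ρ j + ρ (j + 1) = (m + 1).choose (j + 1)) :
    ∀ j ≤ k, ρ j = m.choose j := by
  intro j hj
  induction j with
  | zero => rw [h0, choose_zero_right]
  | succ j ih =>
    have := h j hj
    rw [ih (by omega), choose_succ_succ'] at this
    omega

lemma eq_choose_of_add_eq_choose_of_ge {ρ : ℕ → ℕ} {m k : ℕ}
    (h : ∀ j ≥ k, ρ j + ρ (j + 1) = (m + 1).choose (j + 1)) :
    ∀ j ≥ k, ρ j = m.choose j := by
  suffices ∀ t j, k ≤ j → m < j + t → ρ j = m.choose j from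
    fun j hj => this (m + 1) j hj (by omega)
  intro t
  induction t with
  | zero =>
    intro j hj hmj
    have := h j hj
    rw [choose_eq_zero_of_lt (by omega)] at this
    rw [choose_eq_zero_of_lt (by omega)]
    omega
  | succ t ih =>
    intro j hj hmj
    by_cases hjt : m < j + t
    · exact ih j hj hjt
    have := h j hj
    rw [ih (j + 1) (by omega) (by omega), choose_succ_succ'] at this
    omega

end Nat

namespace starSC

open SC Module LinearMap

variable {K} {n r : ℕ}

lemma notMem_faces_iff {F : Finset (Fin (n + 1))} :
    F ∉ (starSC n r).faces ↔ ∃ G ⊆ F, 0 ∈ G ∧ #G = r + 1 := by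
  refine ⟨fun hF => ?_, fun ⟨G, hGF, hG0, hG⟩ hF => ?_⟩
  · obtain ⟨h0, hF⟩ := Classical.not_imp.1 hF
    obtain ⟨G, h0G, hGF, hG⟩ :=
      exists_subsuperset_card_eq (singleton_subset_iff.2 h0) (by simp) (Nat.lt_of_not_le hF)
    exact ⟨G, hGF, singleton_subset_iff.1 h0G, hG⟩
  · have := hF (hGF hG0)
    have := card_le_card hGF
    omega

variable {W : Finset (Fin (n + 1))}

lemma mem_induce_faces {F : Finset (Fin (n + 1))} :
    F ∈ ((starSC n r).induce W).faces ↔ (0 ∈ F → #F ≤ r) ∧ F ⊆ W :=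
  Iff.rfl

lemma finrank_chain_induce_of_le {k : ℕ} (hk : k ≤ r) :
    finrank K (((starSC n r).induce W).chain K k) = (#W).choose k := by
  rw [finrank_chain_eq_card fun F => ?_, card_powersetCard]
  rw [mem_powersetCard, mem_induce_faces]
  constructor
  · rintro ⟨hFW, hF⟩
    exact ⟨⟨fun _ => hF ▸ hk, hFW⟩, hF⟩
  · rintro ⟨⟨-, hFW⟩, hF⟩
    exact ⟨hFW, hF⟩

lemma finrank_chain_induce_of_lt {k : ℕ} (hk : r < k) :
    finrank K (((starSC n r).induce W).chain K k) = (#(W.erase 0)).choose k := by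
  rw [finrank_chain_eq_card fun F => ?_, card_powersetCard]
  rw [mem_powersetCard, mem_induce_faces, subset_erase]
  constructor
  · rintro ⟨⟨hFW, h0⟩, hF⟩
    exact ⟨⟨fun h => absurd h h0, hFW⟩, hF⟩
  · rintro ⟨⟨hr, hFW⟩, hF⟩
    exact ⟨⟨hFW, fun h => by have := hr h; omega⟩, hF⟩

lemma isConeInDegree_induce_zero (h0 : 0 ∈ W) {k : ℕ} (h : k < r ∨ #W ≤ r) :
    ((starSC n r).induce W).IsConeInDegree 0 k := by
  rintro F ⟨-, hFW⟩ hF h0F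
  have hsub : insert 0 F ⊆ W := insert_subset h0 hFW
  refine ⟨fun _ => ?_, hsub⟩
  rcases h with h | h
  · rw [card_insert_of_notMem h0F]
    omega
  · exact (card_le_card hsub).trans h

lemma isConeInDegree_induce_of_ne_zero {v : Fin (n + 1)} (hv : v ∈ W) (hv0 : v ≠ 0) {k : ℕ}
    (h : 0 ∉ W ∨ r < k) : ((starSC n r).induce W).IsConeInDegree v k := by
  rintro F ⟨hF0, hFW⟩ hF _
  have h0F : 0 ∉ F := by
    rcases h with h | h
    · exact fun h0 => h (hFW h0)
    · exact fun h0 => by have := hF0 h0; omega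
  exact ⟨fun h0 => absurd ((mem_insert.1 h0).resolve_left hv0.symm) h0F, insert_subset hv hFW⟩

lemma hdim_induce_of_zero_notMem (hW : W.Nonempty) (h0 : 0 ∉ W) (k : ℕ) :
    ((starSC n r).induce W).hdim K k = 0 := by
  obtain ⟨v, hv⟩ := hW
  exact hdim_eq_zero_of_isCone
    (isConeInDegree_induce_of_ne_zero hv (ne_of_mem_of_not_mem hv h0) (Or.inl h0))

lemma hdim_induce_of_ne (hr : 1 ≤ r) (h0 : 0 ∈ W) {k : ℕ} (hk : k ≠ r) :
    ((starSC n r).induce W).hdim K k = 0 := by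
  by_cases hkW : k < r ∨ #W ≤ r
  · exact hdim_eq_zero_of_isCone (isConeInDegree_induce_zero h0 hkW)
  obtain ⟨v, hv, hv0⟩ := exists_mem_ne (show 1 < #W by omega) 0
  exact hdim_eq_zero_of_isCone (isConeInDegree_induce_of_ne_zero hv hv0 (Or.inr (by omega)))

lemma hdim_induce_self (hr : 1 ≤ r) (h0 : 0 ∈ W) (hW : r < #W) :
    ((starSC n r).induce W).hdim K r = (#W - 2).choose (r - 1) := by
  set Γ := (starSC n r).induce W
  obtain ⟨s, rfl⟩ : ∃ s, r = s + 1 := ⟨r - 1, by omega⟩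
  obtain ⟨m, hm⟩ : ∃ m, #W = m + 2 := ⟨#W - 2, by omega⟩
  obtain ⟨v, hv, hv0⟩ := exists_mem_ne (show 1 < #W by omega) 0
  have hlow : ∀ j ≤ s, finrank K (range (Γ.bdry K j)) = (m + 1).choose j := by
    refine Nat.eq_choose_of_add_eq_choose_of_le ?_ fun j hj => ?_
    · rw [finrank_range_bdry_zero_of_isCone (isConeInDegree_induce_zero h0 (Or.inl (by omega))),
        finrank_chain_induce_of_le (by omega), Nat.choose_zero_right]
    · rw [finrank_range_bdry_add_of_isCone (isConeInDegree_induce_zero h0 (Or.inl (by omega))),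
        finrank_chain_induce_of_le (by omega), hm]
  have hhigh : ∀ j ≥ s + 1, finrank K (range (Γ.bdry K j)) = m.choose j := by
    refine Nat.eq_choose_of_add_eq_choose_of_ge fun j hj => ?_
    rw [finrank_range_bdry_add_of_isCone
        (isConeInDegree_induce_of_ne_zero hv hv0 (Or.inr (by omega))),
      finrank_chain_induce_of_lt (by omega), card_erase_of_mem h0, hm]
    rfl
  have hker : finrank K (ker (Γ.bdryTo K (s + 1))) = (m + 1).choose (s + 1) := by
    have hrank := finrank_range_bdry_add_finrank_ker_bdryTo (K := K) (Δ := Γ) s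
    rw [hlow s le_rfl, finrank_chain_induce_of_le le_rfl, hm,
      Nat.choose_succ_succ' (m + 1)] at hrank
    omega
  rw [hdim, hker, hhigh (s + 1) le_rfl, hm, Nat.choose_succ_succ']
  simp

end starSC

lemma Finset.card_filter_mem_powersetCard_univ {α : Type*} [Fintype α] [DecidableEq α] (a : α)
    {j : ℕ} (hj : 1 ≤ j) :
    #{W ∈ (univ : Finset α).powersetCard j | a ∈ W} =
      (Fintype.card α - 1).choose (j - 1) := by
  simpa using card_filter_powersetCard_subset {a} univ j (subset_univ _) hj

theorem betti_star_general (K : Type*) [Field K] (n r : ℕ) (hr : 1 ≤ r) :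
    {F : Finset (Fin (n + 1)) | F ∉ (starSC n r).faces} =
      {F : Finset (Fin (n + 1)) | ∃ G ⊆ F, 0 ∈ G ∧ G.card = r + 1} ∧
    (∀ i : ℕ, 1 ≤ i → i ≤ n - r + 1 →
      (starSC n r).betti K i (i + r) = (i + r - 2).choose (r - 1) * n.choose (i + r - 1)) ∧
    (∀ i d : ℕ, d ≠ r → (i, d) ≠ (0, 0) → (starSC n r).betti K i (i + d) = 0) := by
  refine ⟨Set.ext fun F => starSC.notMem_faces_iff, fun i hi _ => ?_, fun i d hd hid => ?_⟩
  · have hterm : ∀ W ∈ (univ : Finset (Fin (n + 1))).powersetCard (i + r),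
        ((starSC n r).induce W).hdim K r = if 0 ∈ W then (i + r - 2).choose (r - 1) else 0 := by
      intro W hW
      rw [mem_powersetCard_univ] at hW
      split_ifs with h0
      · rw [starSC.hdim_induce_self hr h0 (by omega), hW]
      · exact starSC.hdim_induce_of_zero_notMem (card_pos.1 (by omega)) h0 r
    rw [SC.betti, Nat.add_sub_cancel_left, sum_congr rfl hterm, ← sum_filter, sum_const,
      card_filter_mem_powersetCard_univ 0 (by omega), Fintype.card_fin, Nat.add_sub_cancel,
      smul_eq_mul, mul_comm]
  · have hpos : 0 < i + d := by
      by_contra h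
      exact hid (by rw [show i = 0 by omega, show d = 0 by omega])
    refine sum_eq_zero fun W hW => ?_
    rw [Nat.add_sub_cancel_left]
    by_cases h0 : 0 ∈ W
    · exact starSC.hdim_induce_of_ne hr h0 hd
    · exact starSC.hdim_induce_of_zero_notMem
        (card_pos.1 ((mem_powersetCard_univ.1 hW).symm ▸ hpos)) h0 d

/-- For the star graph `K_{1,n}` and `r ≥ 1`, `n ≥ r`: the ideal `I_r(K_{1,n})` is
generated by the monomials `x_0 x_{i_1} ⋯ x_{i_r}` (equivalently, the non-faces of its
Stanley–Reisner complex are the sets containing a set `G` with `0 ∈ G`, `|G| = r + 1`),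
and `β_{i,i+r}(R/I_r(K_{1,n})) = C(i+r-2, r-1) · C(n, i+r-1)` for `1 ≤ i ≤ n - r + 1`,
while `β_{i,i+d} = 0` for `d ≠ r` with `(i,d) ≠ (0,0)`. -/
theorem betti_star (K : Type*) [Field K] (n r : ℕ) (hr : 1 ≤ r) (hn : r ≤ n) :
    {F : Finset (Fin (n + 1)) | F ∉ (starSC n r).faces} =
      {F : Finset (Fin (n + 1)) | ∃ G ⊆ F, 0 ∈ G ∧ G.card = r + 1} ∧
    (∀ i : ℕ, 1 ≤ i → i ≤ n - r + 1 →
      (starSC n r).betti K i (i + r) = (i + r - 2).choose (r - 1) * n.choose (i + r - 1)) ∧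
    (∀ i d : ℕ, d ≠ r → (i, d) ≠ (0, 0) → (starSC n r).betti K i (i + d) = 0) :=
  betti_star_general K n r hr
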